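/- arXiv:2303.04461 — 6 statements merged into one kernel-verified Lean document; each statement's English description precedes it below -/
import Mathlib

section
/- If A is an evolution algebra over a field K with natural basis B = {e_i}, E its associated directed graph, and H is a hereditary subset of E^0, then the subspace I_H = span(H) is an ideal of A. -/
/-!
Multiplication is bilinear, so it suffices to check the products `e_j * e_i` with `i ∈ H`.
For `j ≠ i` they vanish, and `e_i * e_i` is a combination of the out-neighbours of `i`,
which lie in `H` because `H` is hereditary.
-/

variable {K ι A : Type*}

section Defs
variable [Field K] [NonUnitalNonAssocCommRing A] [Module K A]
  [SMulCommClass K A A] [IsScalarTower K A A]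

/-- A natural basis: distinct basis elements multiply to zero. -/
def IsNaturalBasis (b : Module.Basis ι K A) : Prop := ∀ i j : ι, i ≠ j → b i * b j = 0

/-- Edge i → j in the associated graph: the j-th coordinate of (b i)² is nonzero. -/
def EvolEdge (b : Module.Basis ι K A) (i j : ι) : Prop := b.repr (b i * b i) j ≠ 0

/-- Hereditary subset of vertices: closed under edges (hence under reachability). -/
def EvolHereditary (b : Module.Basis ι K A) (H : Set ι) : Prop :=
  ∀ i ∈ H, ∀ j, EvolEdge b i j → j ∈ H

/-- Saturated subset: a regular vertex all of whose edge-targets lie in H belongs to H. -/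
def EvolSaturated (b : Module.Basis ι K A) (H : Set ι) : Prop :=
  ∀ i : ι, b i * b i ≠ 0 → (∀ j, EvolEdge b i j → j ∈ H) → i ∈ H

/-- Ideal of a (nonunital, nonassociative, commutative) algebra: a submodule absorbing
multiplication. -/
def IsEvolIdeal (I : Submodule K A) : Prop := ∀ a : A, ∀ x ∈ I, a * x ∈ I

/-- I_H, the span of the basis elements indexed by H. -/
def idealOf (b : Module.Basis ι K A) (H : Set ι) : Submodule K A := Submodule.span K (b '' H)

/-- H_I = {e ∈ B : e² ∈ I}. -/
def hSet (b : Module.Basis ι K A) (I : Submodule K A) : Set ι := {i | b i * b i ∈ I}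

/-- Maximal ideal. -/
def IsMaxIdeal (I : Submodule K A) : Prop :=
  IsEvolIdeal I ∧ I ≠ ⊤ ∧
    ∀ J : Submodule K A, IsEvolIdeal J → I ≤ J → J = I ∨ J = ⊤

/-- Absorption property of an ideal. -/
def Absorption (I : Submodule K A) : Prop := ∀ x : A, (∀ a : A, x * a ∈ I) → x ∈ I

end Defs

/-- A², the span of all products. -/
def sqIdeal (K A : Type*) [Field K] [NonUnitalNonAssocCommRing A] [Module K A] :
    Submodule K A :=
  Submodule.span K {x : A | ∃ a c : A, x = a * c}

variable [Field K] [NonUnitalNonAssocCommRing A] [Module K A]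
  [SMulCommClass K A A] [IsScalarTower K A A]

theorem isEvolIdeal_iff_map₂_mul_top_le (I : Submodule K A) :
    IsEvolIdeal I ↔ Submodule.map₂ (LinearMap.mul K A) ⊤ I ≤ I := by
  rw [Submodule.map₂_le]
  exact ⟨fun h a _ x hx => h a x hx, fun h a x hx => h a Submodule.mem_top x hx⟩

theorem isEvolIdeal_span_of_basis_mul_mem (b : Module.Basis ι K A) (s : Set A)
    (h : ∀ i, ∀ x ∈ s, b i * x ∈ Submodule.span K s) : IsEvolIdeal (Submodule.span K s) := by
  rw [isEvolIdeal_iff_map₂_mul_top_le, ← b.span_eq, Submodule.map₂_span_span, Submodule.span_le]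
  rintro _ ⟨_, ⟨i, rfl⟩, x, hx, rfl⟩
  exact h i x hx

omit [SMulCommClass K A A] [IsScalarTower K A A] in
theorem basis_mul_self_mem_idealOf (b : Module.Basis ι K A) {H : Set ι}
    (hH : EvolHereditary b H) {i : ι} (hi : i ∈ H) : b i * b i ∈ idealOf b H :=
  b.mem_span_image.mpr fun j hj => hH i hi j (Finsupp.mem_support_iff.mp hj)

theorem stmt0 (b : Module.Basis ι K A) (hb : IsNaturalBasis b) (H : Set ι)
    (hH : EvolHereditary b H) : IsEvolIdeal (idealOf b H) := by
  refine isEvolIdeal_span_of_basis_mul_mem b _ ?_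
  rintro j _ ⟨i, hi, rfl⟩
  rcases eq_or_ne j i with rfl | hji
  · exact basis_mul_self_mem_idealOf b hH hi
  · rw [hb j i hji]
    exact Submodule.zero_mem _
end

section
/- If A is an evolution algebra with natural basis B and associated graph E, and I is an ideal of A, then the set H_I := {e_i ∈ B : e_i^2 ∈ I} is a hereditary subset of E^0. -/
variable {K ι A : Type*}

namespace IsNaturalBasis

variable [Field K] [NonUnitalNonAssocCommRing A] [Module K A] [SMulCommClass K A A]
  {b : Module.Basis ι K A}

theorem basis_mul_eq_repr_smul (hb : IsNaturalBasis b) (j : ι) (x : A) :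
    b j * x = b.repr x j • (b j * b j) := by
  let sqCoord : A →ₗ[K] A := (b.coord j).smulRight (b j * b j)
  have hext : LinearMap.mulLeft K (b j) = sqCoord := by
    refine b.ext fun k => ?_
    rcases eq_or_ne k j with rfl | hkj
    · simp [sqCoord]
    · simp [sqCoord, hb j k hkj.symm, Finsupp.single_eq_of_ne' hkj]
  exact LinearMap.congr_fun hext x

theorem basis_sq_mem_of_edge (hb : IsNaturalBasis b) {I : Submodule K A} (hI : IsEvolIdeal I)
    {i j : ι} (hi : b i * b i ∈ I) (hij : EvolEdge b i j) : b j * b j ∈ I := by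
  have hmem : b j * (b i * b i) ∈ I := hI _ _ hi
  rwa [hb.basis_mul_eq_repr_smul, Submodule.smul_mem_iff _ hij] at hmem

end IsNaturalBasis

variable [Field K] [NonUnitalNonAssocCommRing A] [Module K A]
  [SMulCommClass K A A] [IsScalarTower K A A]

theorem stmt1 (b : Module.Basis ι K A) (hb : IsNaturalBasis b) (I : Submodule K A)
    (hI : IsEvolIdeal I) : EvolHereditary b (hSet b I) :=
  fun _ hi _ hij => hb.basis_sq_mem_of_edge hI hi hij
end

section
/- Let A be an evolution algebra with natural basis B and I an ideal of A. If H_I = I ∩ B, then H_I is a saturated subset of the vertex set of the associated graph. -/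
variable {K ι A : Type*}

variable [Field K] [NonUnitalNonAssocCommRing A] [Module K A]
  [SMulCommClass K A A] [IsScalarTower K A A]

theorem Module.Basis.mem_of_forall_repr_ne_zero {R M : Type*} [Semiring R] [AddCommMonoid M]
    [Module R M] (b : Module.Basis ι R M) (p : Submodule R M) {x : M}
    (hx : ∀ j, b.repr x j ≠ 0 → b j ∈ p) : x ∈ p :=
  Submodule.span_le.mpr (Set.image_subset_iff.mpr fun j hj => hx j (Finsupp.mem_support_iff.mp hj))
    (b.mem_span_repr_support x)

theorem stmt7_general (b : Module.Basis ι K A) (I : Submodule K A)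
    (h : hSet b I = {i : ι | b i ∈ I}) :
    EvolSaturated b (hSet b I) := by
  intro i _ htargets
  exact b.mem_of_forall_repr_ne_zero I fun j hij => (h ▸ htargets j hij : j ∈ {i | b i ∈ I})

theorem stmt7 (b : Module.Basis ι K A) (hb : IsNaturalBasis b) (I : Submodule K A)
    (hI : IsEvolIdeal I) (h : hSet b I = {i : ι | b i ∈ I}) :
    EvolSaturated b (hSet b I) :=
  stmt7_general b I h
end

section
/- Let A be an evolution algebra with natural basis B and I a maximal ideal of A such that A² is not contained in I. Then I = I_{H_I}. -/
variable {K ι A : Type*}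

variable [Field K] [NonUnitalNonAssocCommRing A] [Module K A]
  [SMulCommClass K A A] [IsScalarTower K A A]

/-! In an evolution algebra `e_i x = x_i e_i²`, so an ideal containing `x` contains `e_i²` for
every `i` in the support of `x`: hence `I ⊆ I_{H_I}`, and `I_{H_I}` is again an ideal because
`H_I` is hereditary. By maximality `I_{H_I}` is `I` or `A`, and `I_{H_I} = A` would force
`A² ⊆ I`, since every product `x e_i` is a multiple of `e_i² ∈ I` for `i ∈ H_I`. -/

namespace IsNaturalBasis

variable {K ι A : Type*} [Field K] [NonUnitalNonAssocCommRing A] [Module K A]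
  [SMulCommClass K A A] {b : Module.Basis ι K A}

theorem basis_mul (hb : IsNaturalBasis b) (i : ι) (x : A) :
    b i * x = b.repr x i • (b i * b i) := by
  nth_rewrite 1 [← b.linearCombination_repr x]
  rw [Finsupp.linearCombination_apply, Finsupp.mul_sum,
    Finsupp.sum_eq_single i (fun j _ hji => by rw [mul_smul_comm, hb i j hji.symm, smul_zero])
      (fun _ => by rw [zero_smul, mul_zero]),
    mul_smul_comm]

theorem mul_basis (hb : IsNaturalBasis b) (x : A) (i : ι) :
    x * b i = b.repr x i • (b i * b i) := by
  rw [mul_comm, hb.basis_mul]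

theorem sq_mem_of_repr_ne_zero (hb : IsNaturalBasis b) {I : Submodule K A} (hI : IsEvolIdeal I)
    {x : A} (hx : x ∈ I) {i : ι} (hi : b.repr x i ≠ 0) : b i * b i ∈ I := by
  have h := I.smul_mem (b.repr x i)⁻¹ (hI (b i) x hx)
  rwa [hb.basis_mul, smul_smul, inv_mul_cancel₀ hi, one_smul] at h

theorem le_idealOf_hSet (hb : IsNaturalBasis b) {I : Submodule K A} (hI : IsEvolIdeal I) :
    I ≤ idealOf b (hSet b I) := fun x hx => by
  rw [idealOf, Module.Basis.mem_span_image]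
  exact fun i hi => hb.sq_mem_of_repr_ne_zero hI hx (Finsupp.mem_support_iff.mp hi)

theorem evolHereditary_hSet (hb : IsNaturalBasis b) {I : Submodule K A} (hI : IsEvolIdeal I) :
    EvolHereditary b (hSet b I) :=
  fun _ hi _ hij => hb.sq_mem_of_repr_ne_zero hI hi hij

theorem mul_mem_of_mem_idealOf (hb : IsNaturalBasis b) {H : Set ι} {J : Submodule K A}
    (hH : ∀ i ∈ H, b i * b i ∈ J) (a : A) {x : A} (hx : x ∈ idealOf b H) : a * x ∈ J := by
  suffices idealOf b H ≤ J.comap (LinearMap.mulLeft K a) from this hx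
  rw [idealOf, Submodule.span_le]
  rintro _ ⟨i, hi, rfl⟩
  change a * b i ∈ J
  rw [hb.mul_basis]
  exact J.smul_mem _ (hH i hi)

theorem isEvolIdeal_idealOf (hb : IsNaturalBasis b) {H : Set ι} (hH : EvolHereditary b H) :
    IsEvolIdeal (idealOf b H) := by
  refine fun a x hx => hb.mul_mem_of_mem_idealOf (fun i hi => ?_) a hx
  rw [idealOf, Module.Basis.mem_span_image]
  exact fun j hj => hH i hi j (Finsupp.mem_support_iff.mp hj)

theorem sqIdeal_le_of_idealOf_hSet_eq_top (hb : IsNaturalBasis b) {I : Submodule K A}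
    (htop : idealOf b (hSet b I) = ⊤) : sqIdeal K A ≤ I := by
  rw [sqIdeal, Submodule.span_le]
  rintro _ ⟨a, c, rfl⟩
  rw [SetLike.mem_coe, mul_comm]
  exact hb.mul_mem_of_mem_idealOf (fun _ hi => hi) c (htop ▸ Submodule.mem_top)

end IsNaturalBasis

theorem stmt9 (b : Module.Basis ι K A) (hb : IsNaturalBasis b) (I : Submodule K A)
    (hI : IsMaxIdeal I) (hsq : ¬ sqIdeal K A ≤ I) :
    I = idealOf b (hSet b I) := by
  obtain ⟨hIdeal, -, hmax⟩ := hI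
  rcases hmax _ (hb.isEvolIdeal_idealOf (hb.evolHereditary_hSet hIdeal))
      (hb.le_idealOf_hSet hIdeal) with h | h
  · exact h.symm
  · exact absurd (hb.sqIdeal_le_of_idealOf_hSet_eq_top h) hsq
end

section
/- Let A be an evolution algebra with natural basis B and associated graph E, and let H be a hereditary subset of E^0. If I_H is a maximal ideal of A, then H is a maximal element of the poset of proper hereditary subsets of E^0. -/
variable {K ι A : Type*}

variable [Field K] [NonUnitalNonAssocCommRing A] [Module K A]
  [SMulCommClass K A A] [IsScalarTower K A A]

/-!
Distinct hereditary sets span distinct ideals, and `I_{E^0} = A`. So if `H ⊆ H'` with `H'`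
hereditary, maximality of `I_H` forces `I_{H'} = I_H` or `I_{H'} = A`, i.e. `H' = H` or
`H' = E^0`. That `I_{H'}` is an ideal comes from the natural basis: `a e_j` is a multiple of
`e_j²`, whose support lies in `H'` whenever `j ∈ H'`.
-/

section idealOf

omit [SMulCommClass K A A] [IsScalarTower K A A]

variable (b : Module.Basis ι K A)

theorem basis_mem_idealOf_iff (H : Set ι) (j : ι) : b j ∈ idealOf b H ↔ j ∈ H := by
  rw [idealOf, Module.Basis.mem_span_image, Module.Basis.repr_self,
    Finsupp.support_single _ one_ne_zero]
  simp

theorem idealOf_mono {H H' : Set ι} (h : H ⊆ H') : idealOf b H ≤ idealOf b H' :=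
  Submodule.span_mono (Set.image_mono h)

theorem idealOf_injective : Function.Injective (idealOf b) := fun H H' h =>
  Set.ext fun j => by rw [← basis_mem_idealOf_iff b H, h, basis_mem_idealOf_iff]

theorem idealOf_univ : idealOf b Set.univ = ⊤ := by
  rw [idealOf, Set.image_univ, Module.Basis.span_eq]

theorem idealOf_eq_top_iff {H : Set ι} : idealOf b H = ⊤ ↔ H = Set.univ := by
  rw [← idealOf_univ b, (idealOf_injective b).eq_iff]

theorem EvolHereditary.mul_self_mem_idealOf {b : Module.Basis ι K A} {H : Set ι}
    (hH : EvolHereditary b H) {j : ι} (hj : j ∈ H) : b j * b j ∈ idealOf b H := by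
  rw [← b.linearCombination_repr (b j * b j), Finsupp.linearCombination_apply, Finsupp.sum]
  refine Submodule.sum_mem _ fun k hk => Submodule.smul_mem _ _ ?_
  exact Submodule.subset_span ⟨k, hH j hj k (Finsupp.mem_support_iff.mp hk), rfl⟩

end idealOf

omit [SMulCommClass K A A] in
theorem IsNaturalBasis.mul_basis_s10 {b : Module.Basis ι K A} (hb : IsNaturalBasis b) (a : A)
    (j : ι) : a * b j = b.repr a j • (b j * b j) := by
  conv_lhs => rw [← b.linearCombination_repr a]
  rw [Finsupp.linearCombination_apply, Finsupp.sum, Finset.sum_mul]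
  refine (Finset.sum_eq_single j (fun i _ hij => ?_) (fun hj => ?_)).trans
    (smul_mul_assoc _ _ _)
  · rw [smul_mul_assoc, hb i j hij, smul_zero]
  · rw [Finsupp.notMem_support_iff.mp hj, zero_smul, zero_mul]

theorem EvolHereditary.isEvolIdeal_idealOf {b : Module.Basis ι K A} (hb : IsNaturalBasis b)
    {H : Set ι} (hH : EvolHereditary b H) : IsEvolIdeal (idealOf b H) := by
  intro a x hx
  have hle : idealOf b H ≤ (idealOf b H).comap (LinearMap.mulLeft K a) := by
    rw [idealOf, Submodule.span_le]
    rintro _ ⟨j, hj, rfl⟩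
    rw [SetLike.mem_coe, Submodule.mem_comap, LinearMap.mulLeft_apply, hb.mul_basis_s10]
    exact Submodule.smul_mem _ _ (hH.mul_self_mem_idealOf hj)
  exact hle hx

theorem stmt10_general (b : Module.Basis ι K A) (hb : IsNaturalBasis b) (H : Set ι)
    (hmax : IsMaxIdeal (idealOf b H)) :
    H ≠ Set.univ ∧
      ∀ H' : Set ι, EvolHereditary b H' → H ⊆ H' → H' = H ∨ H' = Set.univ := by
  refine ⟨fun h => hmax.2.1 ((idealOf_eq_top_iff b).mpr h), fun H' hH' hsub => ?_⟩
  rcases hmax.2.2 _ (hH'.isEvolIdeal_idealOf hb) (idealOf_mono b hsub) with h | h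
  · exact Or.inl (idealOf_injective b h)
  · exact Or.inr ((idealOf_eq_top_iff b).mp h)

theorem stmt10 (b : Module.Basis ι K A) (hb : IsNaturalBasis b) (H : Set ι)
    (hH : EvolHereditary b H) (hmax : IsMaxIdeal (idealOf b H)) :
    H ≠ Set.univ ∧
      ∀ H' : Set ι, EvolHereditary b H' → H ⊆ H' → H' = H ∨ H' = Set.univ :=
  stmt10_general b hb H hmax
end

section
/- Let A be a commutative algebra over a field K and I a maximal ideal of A such that either dim(A/I) ≠ 1 or A² ⊄ I. Then I has the absorption property: xA ⊆ I implies x ∈ I. -/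
variable {K ι A : Type*}

/-!
If `xA ⊆ I` but `x ∉ I`, then `I + Kx` is an ideal strictly containing `I`, so by maximality it
is all of `A`. Then `A/I` is spanned by the nonzero class of `x`, so it is one-dimensional, and
`A² = A(I + Kx) ⊆ I`; both are excluded by hypothesis.
-/

open Submodule

theorem Submodule.rank_quotient_eq_one_of_sup_span_singleton_eq_top {V : Type*} [DivisionRing K]
    [AddCommGroup V] [Module K V] {I : Submodule K V} {x : V} (hx : x ∉ I)
    (htop : I ⊔ K ∙ x = ⊤) : Module.rank K (V ⧸ I) = 1 := by
  refine rank_eq_one (I.mkQ x) ((Quotient.mk_eq_zero I).not.mpr hx) fun w => ?_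
  obtain ⟨a, rfl⟩ := I.mkQ_surjective w
  obtain ⟨i, hi, z, hz, rfl⟩ := mem_sup.mp (htop ▸ mem_top : a ∈ I ⊔ K ∙ x)
  obtain ⟨c, rfl⟩ := mem_span_singleton.mp hz
  exact ⟨c, by simp [(Quotient.mk_eq_zero I).mpr hi]⟩

section Absorption

variable [Field K] [NonUnitalNonAssocCommRing A] [Module K A] [SMulCommClass K A A]
  {I : Submodule K A} {x : A}

theorem IsEvolIdeal.mul_mem_of_mem_sup_span_singleton (hI : IsEvolIdeal I)
    (hx : ∀ a, x * a ∈ I) (a : A) {y : A} (hy : y ∈ I ⊔ K ∙ x) : a * y ∈ I := by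
  obtain ⟨i, hi, z, hz, rfl⟩ := mem_sup.mp hy
  obtain ⟨c, rfl⟩ := mem_span_singleton.mp hz
  rw [mul_add, mul_smul_comm, mul_comm a x]
  exact I.add_mem (hI a i hi) (I.smul_mem c (hx a))

theorem IsEvolIdeal.sup_span_singleton (hI : IsEvolIdeal I) (hx : ∀ a, x * a ∈ I) :
    IsEvolIdeal (I ⊔ K ∙ x) := fun a _ hy =>
  mem_sup_left (hI.mul_mem_of_mem_sup_span_singleton hx a hy)

theorem IsEvolIdeal.sqIdeal_le_of_sup_span_singleton_eq_top (hI : IsEvolIdeal I)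
    (hx : ∀ a, x * a ∈ I) (htop : I ⊔ K ∙ x = ⊤) : sqIdeal K A ≤ I := by
  rw [sqIdeal, span_le]
  rintro _ ⟨a, c, rfl⟩
  exact hI.mul_mem_of_mem_sup_span_singleton hx a (htop ▸ mem_top)

end Absorption

variable [Field K] [NonUnitalNonAssocCommRing A] [Module K A]
  [SMulCommClass K A A] [IsScalarTower K A A]

theorem stmt15 (I : Submodule K A) (hI : IsMaxIdeal I)
    (hside : Module.rank K (A ⧸ I) ≠ 1 ∨ ¬ sqIdeal K A ≤ I) :
    Absorption I := by
  intro x hx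
  by_contra hxI
  rcases hI.2.2 _ (hI.1.sup_span_singleton hx) le_sup_left with heq | htop
  · exact hxI (heq ▸ mem_sup_right (mem_span_singleton_self x))
  · rcases hside with hrank | hsq
    · exact hrank (rank_quotient_eq_one_of_sup_span_singleton_eq_top hxI htop)
    · exact hsq (hI.1.sqIdeal_le_of_sup_span_singleton_eq_top hx htop)
end
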